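/- arXiv:2108.09008 — 2 statements merged into one kernel-verified Lean document; each statement's English description precedes it below -/
import Mathlib

section
/- Let (Ω,F,P) be a probability space with a discrete filtration (F_j)_{j=0,...,m}, and let G = (G_j)_{j=0,...,m} be an adapted integrable process. Define the Snell envelope by backward induction: S_m = G_m and S_j = max(G_j, E[S_{j+1} | F_j]) for j < m. Then S is a supermartingale dominating G, and the stopping time τ* := min{j : S_j = G_j} is optimal: E[G_{τ*}] = E[S_0] = sup_{τ} E[G_τ], where the supremum is over all {0,...,m}-valued stopping times τ. -/
/-!
Telescoping gives, for a stopping time `σ ≤ N`,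
`E[f_σ] = E[f_0] + ∑_{i<N} E[1_{i<σ} (E[f_{i+1} | ℱ_i] - f_i)]`, since `{i < σ} ∈ ℱ_i`.
For the Snell envelope every summand is `≤ 0`, which bounds `E[G_σ] ≤ E[S_σ]` by `E[S_0]`.
Before `τ*` the maximum defining `S_i` is attained by the conditional expectation, so for
`σ = τ*` every summand vanishes, and `G_{τ*} = S_{τ*}`.
-/

open MeasureTheory

theorem eq_add_sum_range_ite_sub {E : Type*} [AddCommGroup E] (u : ℕ → E) {n N : ℕ}
    (hn : n ≤ N) : u n = u 0 + ∑ i ∈ Finset.range N, if i < n then u (i + 1) - u i else 0 := by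
  rw [← Finset.sum_filter, show (Finset.range N).filter (· < n) = Finset.range n by
    ext i; simp only [Finset.mem_filter, Finset.mem_range]; omega, Finset.sum_range_sub]
  abel

section Filtration

variable {Ω : Type*} {m0 : MeasurableSpace Ω} {𝒢 : Filtration ℕ m0}

theorem isStoppingTime_natCast {σ : Ω → ℕ} (hσ : ∀ j, MeasurableSet[𝒢 j] {ω | σ ω = j}) :
    IsStoppingTime 𝒢 (fun ω => (σ ω : WithTop ℕ)) :=
  isStoppingTime_of_measurableSet_eq fun j => by simpa using hσ j

theorem measurableSet_lt_of_measurableSet_eq {σ : Ω → ℕ}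
    (hσ : ∀ j, MeasurableSet[𝒢 j] {ω | σ ω = j}) (i : ℕ) : MeasurableSet[𝒢 i] {ω | i < σ ω} := by
  simpa using (isStoppingTime_natCast hσ).measurableSet_gt i

theorem measurableSet_sInf_setOf_eq {p : ℕ → Ω → Prop} {N : ℕ} (hpN : ∀ ω, p N ω)
    (hp : ∀ i ≤ N, MeasurableSet[𝒢 i] {ω | p i ω}) (j : ℕ) :
    MeasurableSet[𝒢 j] {ω | sInf {i | p i ω} = j} := by
  classical
  rcases le_or_gt j N with hj | hj
  · have hset : {ω | sInf {i | p i ω} = j} = {ω | p j ω} ∩ ⋂ i < j, {ω | p i ω}ᶜ := by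
      ext ω
      rw [Set.mem_ofPred_eq, Nat.sInf_def (⟨N, hpN ω⟩ : {i | p i ω}.Nonempty), Nat.find_eq_iff]
      simp
    rw [hset]
    exact (hp j hj).inter <| .iInter fun i => .iInter fun hi =>
      (𝒢.mono hi.le _ (hp i (hi.le.trans hj))).compl
  · convert @MeasurableSet.empty Ω (𝒢 j)
    refine Set.eq_empty_of_forall_notMem fun ω hω => ?_
    exact hj.not_ge (hω ▸ Nat.sInf_le (hpN ω))

variable {μ : Measure Ω}

theorem integrable_stoppedValue_nat {f : ℕ → Ω → ℝ} (hf : ∀ n, Integrable (f n) μ)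
    {σ : Ω → ℕ} (hσ : ∀ j, MeasurableSet[𝒢 j] {ω | σ ω = j}) {N : ℕ} (hσN : ∀ ω, σ ω ≤ N) :
    Integrable (fun ω => f (σ ω) ω) μ :=
  integrable_stoppedValue ℕ (isStoppingTime_natCast hσ) hf (N := N) fun ω => by simpa using hσN ω

theorem integral_stoppedValue_nat_eq_add_sum [SigmaFiniteFiltration μ 𝒢] {f : ℕ → Ω → ℝ}
    (hf : ∀ n, Integrable (f n) μ) {σ : Ω → ℕ} (hσ : ∀ j, MeasurableSet[𝒢 j] {ω | σ ω = j})
    {N : ℕ} (hσN : ∀ ω, σ ω ≤ N) :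
    ∫ ω, f (σ ω) ω ∂μ = ∫ ω, f 0 ω ∂μ +
      ∑ i ∈ Finset.range N, ∫ ω in {ω | i < σ ω}, (μ[f (i + 1)|𝒢 i] - f i) ω ∂μ := by
  have hA := measurableSet_lt_of_measurableSet_eq hσ
  have hinc : ∀ i, Integrable ({ω | i < σ ω}.indicator (f (i + 1) - f i)) μ := fun i =>
    ((hf _).sub (hf i)).indicator (𝒢.le i _ (hA i))
  have hpt : (fun ω => f (σ ω) ω) = fun ω => f 0 ω +
      ∑ i ∈ Finset.range N, {ω | i < σ ω}.indicator (f (i + 1) - f i) ω := by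
    funext ω
    simp only [Set.indicator_apply, Set.mem_ofPred_eq, Pi.sub_apply]
    exact eq_add_sum_range_ite_sub (f · ω) (hσN ω)
  rw [hpt, integral_add (hf 0) (integrable_finsetSum _ fun i _ => hinc i),
    integral_finsetSum _ fun i _ => hinc i]
  congr 1
  refine Finset.sum_congr rfl fun i _ => ?_
  rw [integral_indicator (𝒢.le i _ (hA i)), Pi.sub_def, Pi.sub_def,
    integral_sub (hf _).integrableOn (hf i).integrableOn,
    integral_sub integrable_condExp.integrableOn (hf i).integrableOn,
    setIntegral_condExp (𝒢.le i) (hf _) (hA i)]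

end Filtration

section SnellEnvelope

variable {Ω : Type*} {m0 : MeasurableSpace Ω}

def IsSnellEnvelope (μ : Measure Ω) (ℱ : ℕ → MeasurableSpace Ω) (m : ℕ) (G S : ℕ → Ω → ℝ) :
    Prop :=
  S m = G m ∧ ∀ j, j < m → S j = fun ω => max (G j ω) ((μ[S (j + 1)|ℱ j]) ω)

namespace IsSnellEnvelope

variable {μ : Measure Ω} {ℱ : ℕ → MeasurableSpace Ω} {m j : ℕ} {G S : ℕ → Ω → ℝ}

theorem le (hS : IsSnellEnvelope μ ℱ m G S) (hj : j ≤ m) (ω : Ω) : G j ω ≤ S j ω := by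
  rcases hj.lt_or_eq with hj | rfl
  · rw [hS.2 j hj]
    exact le_max_left _ _
  · rw [hS.1]

theorem condExp_le (hS : IsSnellEnvelope μ ℱ m G S) (hj : j < m) (ω : Ω) :
    (μ[S (j + 1)|ℱ j]) ω ≤ S j ω := by
  rw [hS.2 j hj]
  exact le_max_right _ _

theorem eq_condExp_of_ne (hS : IsSnellEnvelope μ ℱ m G S) (hj : j < m) {ω : Ω}
    (hne : S j ω ≠ G j ω) : S j ω = (μ[S (j + 1)|ℱ j]) ω := by
  have hmax := congrFun (hS.2 j hj) ω
  rcases max_choice (G j ω) ((μ[S (j + 1)|ℱ j]) ω) with h | h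
  · exact absurd (hmax.trans h) hne
  · exact hmax.trans h

theorem stronglyMeasurable (hS : IsSnellEnvelope μ ℱ m G S)
    (hG : ∀ j, StronglyMeasurable[ℱ j] (G j)) (hj : j ≤ m) : StronglyMeasurable[ℱ j] (S j) := by
  rcases hj.lt_or_eq with hj | rfl
  · rw [hS.2 j hj]
    exact ((hG j).measurable.max stronglyMeasurable_condExp.measurable).stronglyMeasurable
  · rw [hS.1]
    exact hG j

end IsSnellEnvelope

end SnellEnvelope

theorem stmt_6 {Ω : Type*} [m0 : MeasurableSpace Ω] (μ : Measure Ω) [IsProbabilityMeasure μ]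
    (m : ℕ) (ℱ : ℕ → MeasurableSpace Ω) (hmono : Monotone ℱ) (hle : ∀ j, ℱ j ≤ m0)
    (G S : ℕ → Ω → ℝ)
    (hGmeas : ∀ j, StronglyMeasurable[ℱ j] (G j))
    (hGint : ∀ j, Integrable (G j) μ)
    (hSint : ∀ j, Integrable (S j) μ)
    (hSm : S m = G m)
    (hSrec : ∀ j, j < m → S j = fun ω => max (G j ω) ((μ[S (j + 1)|ℱ j]) ω))
    (τ : Ω → ℕ) (hτ : ∀ ω, τ ω = sInf {j | S j ω = G j ω}) :
    (∀ j, j ≤ m → ∀ ω, G j ω ≤ S j ω) ∧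
    (∀ j, j < m → μ[S (j + 1)|ℱ j] ≤ᵐ[μ] S j) ∧
    (∀ ω, τ ω ≤ m) ∧
    (∫ ω, G (τ ω) ω ∂μ = ∫ ω, S 0 ω ∂μ) ∧
    (∀ σ : Ω → ℕ, (∀ ω, σ ω ≤ m) → (∀ j, MeasurableSet[ℱ j] {ω | σ ω = j}) →
      ∫ ω, G (σ ω) ω ∂μ ≤ ∫ ω, S 0 ω ∂μ) := by
  let 𝒢 : Filtration ℕ m0 := ⟨ℱ, hmono, hle⟩
  have hS : IsSnellEnvelope μ ℱ m G S := ⟨hSm, hSrec⟩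
  have hstop ω : S m ω = G m ω := congrFun hSm ω
  have hτm ω : τ ω ≤ m := hτ ω ▸ Nat.sInf_le (hstop ω)
  have hτ𝒢 j : MeasurableSet[𝒢 j] {ω | τ ω = j} := by
    simp_rw [hτ]
    exact measurableSet_sInf_setOf_eq hstop
      (fun i hi => (hS.stronglyMeasurable hGmeas hi).measurableSet_eq_fun (hGmeas i)) j
  refine ⟨fun j => hS.le, fun j hj => .of_forall (hS.condExp_le hj), hτm, ?_, fun σ hσm hσ => ?_⟩
  · have hGτ : (fun ω => G (τ ω) ω) = fun ω => S (τ ω) ω := funext fun ω => by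
      rw [hτ ω]
      exact (Nat.sInf_mem (⟨m, hstop ω⟩ : {j | S j ω = G j ω}.Nonempty)).symm
    rw [hGτ, integral_stoppedValue_nat_eq_add_sum (𝒢 := 𝒢) hSint hτ𝒢 hτm, add_eq_left]
    refine Finset.sum_eq_zero fun i hi => setIntegral_eq_zero_of_forall_eq_zero fun ω hω => ?_
    have hne : S i ω ≠ G i ω := Nat.notMem_of_lt_sInf (by rw [← hτ]; exact hω)
    exact sub_eq_zero.2 (hS.eq_condExp_of_ne (Finset.mem_range.1 hi) hne).symm
  · calc ∫ ω, G (σ ω) ω ∂μ ≤ ∫ ω, S (σ ω) ω ∂μ :=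
          integral_mono (integrable_stoppedValue_nat (𝒢 := 𝒢) hGint hσ hσm)
            (integrable_stoppedValue_nat (𝒢 := 𝒢) hSint hσ hσm) fun ω => hS.le (hσm ω) ω
      _ = ∫ ω, S 0 ω ∂μ + ∑ i ∈ Finset.range m,
            ∫ ω in {ω | i < σ ω}, (μ[S (i + 1)|ℱ i] - S i) ω ∂μ :=
          integral_stoppedValue_nat_eq_add_sum (𝒢 := 𝒢) hSint hσ hσm
      _ ≤ ∫ ω, S 0 ω ∂μ := add_le_of_nonpos_right <| Finset.sum_nonpos fun i hi =>
          setIntegral_nonpos (hle i _ (measurableSet_lt_of_measurableSet_eq (𝒢 := 𝒢) hσ i))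
            fun ω _ => sub_nonpos.2 (hS.condExp_le (Finset.mem_range.1 hi) ω)
end

section
/- In the discrete-time Snell envelope setting, for τ* = min{j : S_j = G_j}, the stopped process (S_{j ∧ τ*})_{j=0,...,m} is a martingale. -/
/-!
The increment of the stopped process is `S_{(j+1) ∧ τ} - S_{j ∧ τ} = 1_{j < τ} (S_{j+1} - S_j)`,
and `{j < τ} ∈ ℱ_j` because `τ` is the first time `S` touches `G`. Before that time the maximum in
the Snell recursion is attained by the continuation value, i.e. `S_j = E[S_{j+1} | ℱ_j]` on
`{j < τ}`, so the conditional expectation of the increment vanishes.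
-/

open MeasureTheory

section StoppedProcess

variable {Ω E : Type*} {m0 : MeasurableSpace Ω} {μ : Measure Ω} {ℱ : ℕ → MeasurableSpace Ω}
  {X : ℕ → Ω → E} {τ : Ω → ℕ}

lemma stopped_succ_eq [AddCommGroup E] (X : ℕ → Ω → E) (τ : Ω → ℕ) (j : ℕ) :
    (fun ω => X (min (j + 1) (τ ω)) ω) =
      (fun ω => X (min j (τ ω)) ω) + {ω | j < τ ω}.indicator (X (j + 1) - X j) := by
  funext ω
  by_cases h : j < τ ω
  · simp [h, Nat.succ_le_of_lt h, h.le]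
  · have h' : τ ω ≤ j := not_lt.mp h
    simp [h, h', h'.trans j.le_succ]

variable [NormedAddCommGroup E]

lemma stronglyMeasurable_stopped (hmono : Monotone ℱ) (j : ℕ)
    (hX : ∀ i ≤ j, StronglyMeasurable[ℱ i] (X i))
    (hτ : ∀ i < j, MeasurableSet[ℱ i] {ω | i < τ ω}) :
    StronglyMeasurable[ℱ j] (fun ω => X (min j (τ ω)) ω) := by
  induction j with
  | zero => simpa using hX 0 le_rfl
  | succ j ih =>
    have hprev :=
      ih (fun i hi => hX i (hi.trans j.le_succ)) fun i hi => hτ i (hi.trans j.lt_succ_self)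
    have hXj := (hX j j.le_succ).mono (hmono j.le_succ)
    rw [stopped_succ_eq]
    exact (hprev.mono (hmono j.le_succ)).add
      (((hX (j + 1) le_rfl).sub hXj).indicator (hmono j.le_succ _ (hτ j j.lt_succ_self)))

lemma integrable_stopped (j : ℕ) (hX : ∀ i ≤ j, Integrable (X i) μ)
    (hτ : ∀ i < j, MeasurableSet {ω | i < τ ω}) :
    Integrable (fun ω => X (min j (τ ω)) ω) μ := by
  induction j with
  | zero => simpa using hX 0 le_rfl
  | succ j ih =>
    have hprev :=
      ih (fun i hi => hX i (hi.trans j.le_succ)) fun i hi => hτ i (hi.trans j.lt_succ_self)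
    rw [stopped_succ_eq]
    exact hprev.add (((hX (j + 1) le_rfl).sub (hX j j.le_succ)).indicator (hτ j j.lt_succ_self))

variable [NormedSpace ℝ E] [CompleteSpace E] [IsFiniteMeasure μ]

lemma condExp_stopped_succ_ae_eq (hmono : Monotone ℱ) (hle : ∀ i, ℱ i ≤ m0) (j : ℕ)
    (hX : ∀ i ≤ j, StronglyMeasurable[ℱ i] (X i)) (hXint : ∀ i ≤ j + 1, Integrable (X i) μ)
    (hτ : ∀ i ≤ j, MeasurableSet[ℱ i] {ω | i < τ ω})
    (hmart : ∀ ω, j < τ ω → μ[X (j + 1)|ℱ j] ω = X j ω) :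
    μ[fun ω => X (min (j + 1) (τ ω)) ω|ℱ j] =ᵐ[μ] fun ω => X (min j (τ ω)) ω := by
  have hXτ := stronglyMeasurable_stopped hmono j hX fun i hi => hτ i hi.le
  have hXτint := integrable_stopped j (fun i hi => hXint i (hi.trans j.le_succ))
    fun i hi => hle i _ (hτ i hi.le)
  have hincr := (hXint (j + 1) le_rfl).sub (hXint j j.le_succ)
  have hincr_ce : μ[X (j + 1) - X j|ℱ j] =ᵐ[μ] μ[X (j + 1)|ℱ j] - X j := by
    conv_rhs => rw [← condExp_of_stronglyMeasurable (hle j) (hX j le_rfl) (hXint j j.le_succ)]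
    exact condExp_sub (hXint (j + 1) le_rfl) (hXint j j.le_succ) _
  rw [stopped_succ_eq]
  filter_upwards [condExp_add hXτint (hincr.indicator (hle j _ (hτ j le_rfl))) (ℱ j),
    condExp_indicator hincr (hτ j le_rfl), hincr_ce] with ω hadd hind hce
  rw [hadd, Pi.add_apply, condExp_of_stronglyMeasurable (hle j) hXτ hXτint, hind]
  by_cases hω : j < τ ω
  · simp [Set.indicator_of_mem (show ω ∈ {ω | j < τ ω} from hω), hce, hmart ω hω]
  · simp [Set.indicator_of_notMem (show ω ∉ {ω | j < τ ω} from hω)]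

end StoppedProcess

lemma measurableSet_lt_of_eq_sInf {Ω : Type*} {ℱ : ℕ → MeasurableSpace Ω} (hmono : Monotone ℱ)
    {s : ℕ → Set Ω} {τ : Ω → ℕ} (hτ : ∀ ω, τ ω = sInf {k | ω ∈ s k}) (hne : ∀ ω, ∃ k, ω ∈ s k)
    (i : ℕ) (hs : ∀ k ≤ i, MeasurableSet[ℱ k] (s k)) :
    MeasurableSet[ℱ i] {ω | i < τ ω} := by
  have hlt : {ω | i < τ ω} = ⋂ k ≤ i, (s k)ᶜ := by
    ext ω
    simp only [Set.mem_ofPred_eq, Set.mem_iInter, Set.mem_compl_iff, hτ]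
    refine ⟨fun h k hk => Nat.notMem_of_lt_sInf (hk.trans_lt h), fun h => ?_⟩
    by_contra! hle
    exact h _ hle (Nat.sInf_mem (hne ω))
  rw [hlt]
  exact .biInter (Set.to_countable _) fun k hk => (hmono hk _ (hs k hk)).compl

section Snell

variable {Ω : Type*} {m0 : MeasurableSpace Ω} {μ : Measure Ω} {ℱ : ℕ → MeasurableSpace Ω}
  {m : ℕ} {G S : ℕ → Ω → ℝ}

lemma stronglyMeasurable_snell (hG : ∀ j, StronglyMeasurable[ℱ j] (G j)) (hSm : S m = G m)
    (hSrec : ∀ j, j < m → S j = fun ω => max (G j ω) ((μ[S (j + 1)|ℱ j]) ω))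
    {i : ℕ} (hi : i ≤ m) : StronglyMeasurable[ℱ i] (S i) := by
  induction hi using Nat.decreasingInduction with
  | self => exact hSm ▸ hG m
  | of_succ k hk _ =>
    rw [hSrec k hk]
    -- explicit, since instance search would pick the ambient `m0` over `ℱ k`
    exact @StronglyMeasurable.sup _ _ _ _ (ℱ k) _ _ _ (hG k) stronglyMeasurable_condExp

lemma condExp_snell_eq_of_ne
    (hSrec : ∀ j, j < m → S j = fun ω => max (G j ω) ((μ[S (j + 1)|ℱ j]) ω)) {j : ℕ}
    (hj : j < m) {ω : Ω} (hω : S j ω ≠ G j ω) : μ[S (j + 1)|ℱ j] ω = S j ω := by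
  have hmax := congrFun (hSrec j hj) ω
  rcases max_choice (G j ω) (μ[S (j + 1)|ℱ j] ω) with h | h
  · exact absurd (hmax.trans h) hω
  · exact (hmax.trans h).symm

end Snell

theorem stmt_7_general {Ω : Type*} [m0 : MeasurableSpace Ω] (μ : Measure Ω) [IsProbabilityMeasure μ]
    (m : ℕ) (ℱ : ℕ → MeasurableSpace Ω) (hmono : Monotone ℱ) (hle : ∀ j, ℱ j ≤ m0)
    (G S : ℕ → Ω → ℝ)
    (hGmeas : ∀ j, StronglyMeasurable[ℱ j] (G j))
    (hSint : ∀ j, Integrable (S j) μ)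
    (hSm : S m = G m)
    (hSrec : ∀ j, j < m → S j = fun ω => max (G j ω) ((μ[S (j + 1)|ℱ j]) ω))
    (τ : Ω → ℕ) (hτ : ∀ ω, τ ω = sInf {j | S j ω = G j ω}) :
    ∀ j, j < m →
      (μ[(fun ω => S (min (j + 1) (τ ω)) ω)|ℱ j]) =ᵐ[μ] fun ω => S (min j (τ ω)) ω := by
  intro j hj
  have hS : ∀ i ≤ m, StronglyMeasurable[ℱ i] (S i) := fun i hi =>
    stronglyMeasurable_snell hGmeas hSm hSrec hi
  have hτ_stop : ∀ i < m, MeasurableSet[ℱ i] {ω | i < τ ω} := fun i hi =>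
    measurableSet_lt_of_eq_sInf hmono hτ (fun _ => ⟨m, congrFun hSm _⟩) i
      fun k hk => (hS k (by omega)).measurableSet_eq_fun (hGmeas k)
  exact condExp_stopped_succ_ae_eq hmono hle j (fun i hi => hS i (by omega)) (fun i _ => hSint i)
    (fun i hi => hτ_stop i (by omega)) fun ω hω =>
      condExp_snell_eq_of_ne hSrec hj (Nat.notMem_of_lt_sInf (hτ ω ▸ hω))

theorem stmt_7 {Ω : Type*} [m0 : MeasurableSpace Ω] (μ : Measure Ω) [IsProbabilityMeasure μ]
    (m : ℕ) (ℱ : ℕ → MeasurableSpace Ω) (hmono : Monotone ℱ) (hle : ∀ j, ℱ j ≤ m0)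
    (G S : ℕ → Ω → ℝ)
    (hGmeas : ∀ j, StronglyMeasurable[ℱ j] (G j))
    (hGint : ∀ j, Integrable (G j) μ)
    (hSint : ∀ j, Integrable (S j) μ)
    (hSm : S m = G m)
    (hSrec : ∀ j, j < m → S j = fun ω => max (G j ω) ((μ[S (j + 1)|ℱ j]) ω))
    (τ : Ω → ℕ) (hτ : ∀ ω, τ ω = sInf {j | S j ω = G j ω}) :
    ∀ j, j < m →
      (μ[(fun ω => S (min (j + 1) (τ ω)) ω)|ℱ j]) =ᵐ[μ] fun ω => S (min j (τ ω)) ω :=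
  stmt_7_general (m0 := m0) μ m ℱ hmono hle G S hGmeas hSint hSm hSrec τ hτ
end
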